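/- Helstrom limit for channel position finding with depolarizing channels and maximally entangled inputs (Proposition, non-adaptive content): Let d ≥ 2 and let ζ be the d²-dimensional maximally entangled pure state. For q ∈ [0,1] set τ_q = q·(1/d²)·I_{d²} + (1−q)·ζ, a density matrix on ℂ^{d²}. Let m ≥ 2 and q_B, q_T ∈ [0,1], and for n = 0,…,m−1 define ρ_n = τ_{c_0} ⊗ τ_{c_1} ⊗ … ⊗ τ_{c_{m−1}} on (ℂ^{d²})^{⊗m}, where c_n = q_T and c_k = q_B for k ≠ n. Then for every u ≥ 1, the Helstrom error probability of the equiprobable states (ρ_n^{⊗u})_{n=0}^{m−1} equals h_m^u((1 − d^{−2})·q_B, (1 − d^{−2})·q_T). -/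

import Mathlib

open Matrix BigOperators Finset ComplexOrder

noncomputable section

/-- A density matrix: positive semidefinite with unit trace. -/
def IsDensityMatrix {ι : Type*} [Fintype ι] (ρ : Matrix ι ι ℂ) : Prop :=
  ρ.PosSemidef ∧ ρ.trace = 1

/-- The Helstrom minimum error probability for discriminating the states `ρ n`
with prior probabilities `p n`, optimized over all POVMs. -/
def helstrom {ι : Type*} [Fintype ι] [DecidableEq ι] {m : ℕ}
    (ρ : Fin m → Matrix ι ι ℂ) (p : Fin m → ℝ) : ℝ :=
  1 - sSup { x : ℝ | ∃ M : Fin m → Matrix ι ι ℂ,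
      (∀ n, (M n).PosSemidef) ∧ (∑ n, M n) = 1 ∧
      x = ∑ n, p n * ((M n * ρ n).trace).re }

open Classical in
/-- The positive semidefinite square root (junk value `0` off the PSD cone). -/
def psdSqrt {ι : Type*} [Fintype ι] [DecidableEq ι] (A : Matrix ι ι ℂ) : Matrix ι ι ℂ :=
  if h : A.PosSemidef then (h.1.eigenvectorUnitary : Matrix ι ι ℂ) *
    diagonal ((↑) ∘ (√·) ∘ h.1.eigenvalues) * (star h.1.eigenvectorUnitary : Matrix ι ι ℂ) else 0

/-- The trace norm `‖A‖₁ = tr √(Aᴴ A)`. -/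
def traceNorm {ι : Type*} [Fintype ι] [DecidableEq ι] (A : Matrix ι ι ℂ) : ℝ :=
  ((psdSqrt (Aᴴ * A)).trace).re

/-- The `u`-fold Kronecker (tensor) power of a square matrix. -/
def tensorPow {ι : Type*} (σ : Matrix ι ι ℂ) (u : ℕ) :
    Matrix (Fin u → ι) (Fin u → ι) ℂ :=
  fun i j => ∏ k, σ (i k) (j k)

/-- Tensor product of a family of `m` square matrices. -/
def tensorFam {m : ℕ} {ι : Type*} (σ : Fin m → Matrix ι ι ℂ) :
    Matrix (Fin m → ι) (Fin m → ι) ℂ :=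
  fun i j => ∏ k, σ k (i k) (j k)

/-- Hamming weight of a Boolean string. -/
def hamming {u : ℕ} (x : Fin u → Bool) : ℕ :=
  (Finset.univ.filter fun k => x k = true).card

open Classical in
/-- The channel-position-finding error function `h_m^u(qB,qT)`. -/
def hErr (m u : ℕ) (qB qT : ℝ) : ℝ :=
  1 - (1/(m:ℝ)) * ∑ x : Fin m → Fin u → Bool,
    (let w : Fin m → ℕ := fun ℓ => hamming (x ℓ)
     let W : ℕ := ∑ ℓ, w ℓ
     let ws : ℕ := if qB ≤ qT then Finset.univ.sup w else sInf (Set.range w)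
     qT^ws * (1-qT)^(u-ws) * (qB^(W-ws) * (1-qB)^((m-1)*u-(W-ws))))

/-- The `d²`-dimensional maximally entangled pure state. -/
def maxEnt (d : ℕ) : Matrix (Fin d × Fin d) (Fin d × Fin d) ℂ :=
  fun p q => if p.1 = p.2 ∧ q.1 = q.2 then (1/(d:ℂ)) else 0

/-- The Choi matrix of the depolarizing channel:
`τ_q = q (1/d²) I + (1−q) ζ`. -/
def depolChoi (d : ℕ) (q : ℝ) : Matrix (Fin d × Fin d) (Fin d × Fin d) ℂ :=
  (q:ℂ) • ((1/(d:ℂ)^2) • (1 : Matrix (Fin d × Fin d) (Fin d × Fin d) ℂ))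
    + (((1-q : ℝ)):ℂ) • maxEnt d


/-!
The maximally entangled vector extends to an orthonormal basis of `ℂ^{d²}`, in which `ζ` is the
projection onto the first vector and `τ_q` is diagonal with eigenvalues `1 - r` (once) and
`r / (d² - 1)` (on the other `d² - 1` vectors), where `r = (1 - d⁻²) q`. Hence all the states
`ρ_n^{⊗u}` are diagonal in one product basis, and for commuting states the Helstrom problem is
classical: the optimal measurement reads the basis label `i` and guesses an `n` maximising the
eigenvalue `P_n(i)`, so the success probability is `(1/m) ∑_i max_n P_n(i)`.

`P_n(i)` depends on `i` only through the pattern `x` of tensor factors that are not the entangled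
vector: it is `(d² - 1)^{-‖x‖}` times a product of Bernoulli likelihoods in which block `n` has
parameter `r_T` and the others `r_B`. The `(d² - 1)^{‖x‖}` labels with pattern `x` cancel the
prefactor, and the likelihood is monotone in the weight of the target block (increasing iff
`r_B ≤ r_T`), so the maximum over `n` is attained at a block of maximal, resp. minimal, weight.
-/

section Helstrom

variable {ι : Type*} [Fintype ι] [DecidableEq ι] {m : ℕ}

theorem helstrom_unitary_conj {U : Matrix ι ι ℂ} (hU : U ∈ unitaryGroup ι ℂ)
    (ρ : Fin m → Matrix ι ι ℂ) (p : Fin m → ℝ) :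
    helstrom (fun n => U * ρ n * star U) p = helstrom ρ p := by
  have hUU : star U * U = 1 := mem_unitaryGroup_iff'.mp hU
  have hUU' : U * star U = 1 := mem_unitaryGroup_iff.mp hU
  have htrace (A B : Matrix ι ι ℂ) : (star U * A * U * B).trace = (A * (U * B * star U)).trace := by
    simp only [Matrix.mul_assoc]
    rw [trace_mul_comm]
    simp only [Matrix.mul_assoc]
  unfold helstrom
  congr 2
  ext x
  constructor
  · rintro ⟨M, hM, hsum, rfl⟩
    refine ⟨fun n => star U * M n * U, fun n => ?_, ?_, ?_⟩
    · simpa [star_eq_conjTranspose] using (hM n).conjTranspose_mul_mul_same U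
    · rw [← Finset.sum_mul, ← Finset.mul_sum, hsum, mul_one, hUU]
    · simp only [htrace]
  · rintro ⟨M, hM, hsum, rfl⟩
    refine ⟨fun n => U * M n * star U, fun n => ?_, ?_, ?_⟩
    · simpa [star_eq_conjTranspose] using (hM n).mul_mul_conjTranspose_same U
    · rw [← Finset.sum_mul, ← Finset.mul_sum, hsum, mul_one, hUU']
    · refine Finset.sum_congr rfl fun n _ => ?_
      rw [← htrace, ← Matrix.mul_assoc, ← Matrix.mul_assoc, hUU]
      simp only [Matrix.one_mul, Matrix.mul_assoc, hUU, Matrix.mul_one]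

theorem helstrom_diagonal (P : Fin m → ι → ℝ) (p : Fin m → ℝ) (Pmax : ι → ℝ)
    (hle : ∀ n i, p n * P n i ≤ Pmax i) (hex : ∀ i, ∃ n, p n * P n i = Pmax i) :
    helstrom (fun n => diagonal fun i => (P n i : ℂ)) p = 1 - ∑ i, Pmax i := by
  have htrace (M : Matrix ι ι ℂ) (n : Fin m) :
      p n * ((M * diagonal fun i => (P n i : ℂ)).trace).re = ∑ i, p n * P n i * (M i i).re := by
    simp [trace, mul_diagonal, Complex.re_sum, Finset.mul_sum, mul_comm, mul_left_comm]
  unfold helstrom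
  congr 1
  refine IsGreatest.csSup_eq ⟨?_, ?_⟩
  · choose D hD using hex
    refine ⟨fun n => diagonal fun i => if D i = n then 1 else 0, fun n => ?_, ?_, ?_⟩
    all_goals beta_reduce
    · exact posSemidef_diagonal_iff.mpr fun i => by split_ifs <;> norm_num
    · ext i j
      simp [Matrix.sum_apply, diagonal_apply, one_apply]
    · rw [Finset.sum_congr rfl fun n _ => htrace _ n, Finset.sum_comm]
      refine Finset.sum_congr rfl fun i _ => ?_
      simp [apply_ite Complex.re, hD i]
  · rintro x ⟨M, hM, hsum, rfl⟩
    have hdiag (i : ι) : ∑ n, (M n i i).re = 1 := by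
      simpa [← Complex.re_sum, ← Matrix.sum_apply] using congrArg (fun A => (A i i).re) hsum
    simp only [htrace]
    rw [Finset.sum_comm]
    refine Finset.sum_le_sum fun i _ => ?_
    calc ∑ n, p n * P n i * (M n i i).re ≤ ∑ n, Pmax i * (M n i i).re :=
          Finset.sum_le_sum fun n _ =>
            mul_le_mul_of_nonneg_right (hle n i) (Complex.nonneg_iff.mp (hM n).diag_nonneg).1
      _ = Pmax i := by rw [← Finset.mul_sum, hdiag, mul_one]

end Helstrom

section Tensor

variable {m : ℕ} {ι : Type*}

theorem tensorPow_eq_tensorFam (σ : Matrix ι ι ℂ) (u : ℕ) :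
    tensorPow σ u = tensorFam fun _ : Fin u => σ := rfl

theorem tensorFam_mul [Fintype ι] (A B : Fin m → Matrix ι ι ℂ) :
    tensorFam (fun k => A k * B k) = tensorFam A * tensorFam B := by
  ext i j
  simp only [tensorFam, mul_apply, Fintype.prod_sum, ← Finset.prod_mul_distrib]

theorem tensorFam_diagonal [DecidableEq ι] (f : Fin m → ι → ℂ) :
    tensorFam (fun k => diagonal (f k)) = diagonal fun i => ∏ k, f k (i k) := by
  ext i j
  simp only [tensorFam, diagonal_apply, Finset.prod_ite_zero, Finset.mem_univ, true_implies,
    funext_iff]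

theorem tensorFam_one [DecidableEq ι] : tensorFam (fun _ : Fin m => (1 : Matrix ι ι ℂ)) = 1 := by
  simpa using tensorFam_diagonal (m := m) fun _ _ => (1 : ℂ)

theorem star_tensorFam (A : Fin m → Matrix ι ι ℂ) :
    star (tensorFam A) = tensorFam fun k => star (A k) := by
  ext i j
  simp [tensorFam]

theorem tensorFam_mem_unitaryGroup [Fintype ι] [DecidableEq ι] {U : Fin m → Matrix ι ι ℂ}
    (hU : ∀ k, U k ∈ unitaryGroup ι ℂ) : tensorFam U ∈ unitaryGroup (Fin m → ι) ℂ := by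
  rw [mem_unitaryGroup_iff, star_tensorFam, ← tensorFam_mul]
  simp only [mem_unitaryGroup_iff.mp (hU _), tensorFam_one]

theorem tensorFam_unitary_diagonal [Fintype ι] [DecidableEq ι] (U : Fin m → Matrix ι ι ℂ)
    (f : Fin m → ι → ℂ) :
    tensorFam (fun k => U k * diagonal (f k) * star (U k))
      = tensorFam U * (diagonal fun i => ∏ k, f k (i k)) * star (tensorFam U) := by
  rw [tensorFam_mul, tensorFam_mul, tensorFam_diagonal, star_tensorFam]

end Tensor

theorem exists_mem_unitaryGroup_apply_eq {α : Type*} [Fintype α] [DecidableEq α]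
    (v : EuclideanSpace ℂ α) (hv : ‖v‖ = 1) (a₀ : α) :
    ∃ V ∈ unitaryGroup α ℂ, ∀ i, V i a₀ = v i := by
  have hv' : Orthonormal ℂ (({a₀} : Set α).domRestrict fun _ => v) := by
    rw [orthonormal_iff_ite]
    rintro ⟨i, rfl⟩ ⟨j, rfl⟩
    simp [Set.domRestrict_apply, hv]
  obtain ⟨B, hB⟩ := hv'.exists_orthonormalBasis_extension_of_card_eq (by simp)
  refine ⟨(EuclideanSpace.basisFun α ℂ).toBasis.toMatrix B,
    (EuclideanSpace.basisFun α ℂ).toMatrix_orthonormalBasis_mem_unitary B, fun i => ?_⟩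
  simp [Module.Basis.toMatrix_apply, hB a₀ rfl]

def maxEntVec (d : ℕ) : EuclideanSpace ℂ (Fin d × Fin d) :=
  WithLp.toLp 2 fun p => if p.1 = p.2 then (√(d : ℝ) : ℂ)⁻¹ else 0

theorem maxEnt_apply_eq (d : ℕ) (i j : Fin d × Fin d) :
    maxEnt d i j = maxEntVec d i * starRingEnd ℂ (maxEntVec d j) := by
  have hsq : (√(d : ℝ) : ℂ)⁻¹ * (√(d : ℝ) : ℂ)⁻¹ = 1 / d := by
    rw [← mul_inv, ← Complex.ofReal_mul, Real.mul_self_sqrt d.cast_nonneg, one_div,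
      Complex.ofReal_natCast]
  by_cases hi : i.1 = i.2 <;> by_cases hj : j.1 = j.2
  all_goals simp [maxEnt, maxEntVec, hi, hj, hsq]

theorem norm_maxEntVec {d : ℕ} (hd : d ≠ 0) : ‖maxEntVec d‖ = 1 := by
  have h : inner ℂ (maxEntVec d) (maxEntVec d) = (1 : ℂ) := by
    simp_rw [PiLp.inner_apply, RCLike.inner_apply, ← maxEnt_apply_eq]
    simp [maxEnt, Fintype.sum_prod_type, hd]
  rw [inner_self_eq_norm_sq_to_K] at h
  exact (pow_eq_one_iff_of_nonneg (norm_nonneg _) two_ne_zero).mp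
    (by exact_mod_cast congrArg Complex.re h)

theorem mul_diagonal_mul_star_apply {α : Type*} [Fintype α] [DecidableEq α] (V : Matrix α α ℂ)
    (f : α → ℂ) (i j : α) :
    (V * diagonal f * star V) i j = ∑ a, f a * (V i a * starRingEnd ℂ (V j a)) := by
  rw [mul_apply]
  simp only [mul_diagonal, star_apply, RCLike.star_def]
  exact Finset.sum_congr rfl fun a _ => by ring

def depolSpectrum (d : ℕ) (a₀ : Fin d × Fin d) (r : ℝ) (a : Fin d × Fin d) : ℝ :=
  if a = a₀ then 1 - r else r / ((d : ℝ) ^ 2 - 1)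

theorem exists_depolChoi_eq_unitary_diagonal {d : ℕ} (hd : 1 < d) :
    ∃ a₀, ∃ V ∈ unitaryGroup (Fin d × Fin d) ℂ, ∀ q, depolChoi d q =
      V * diagonal (fun a => (depolSpectrum d a₀ ((1 - 1 / (d : ℝ) ^ 2) * q) a : ℂ)) * star V := by
  let a₀ : Fin d × Fin d := (⟨0, by omega⟩, ⟨0, by omega⟩)
  obtain ⟨V, hV, hVa₀⟩ :=
    exists_mem_unitaryGroup_apply_eq (maxEntVec d) (norm_maxEntVec (by omega)) a₀
  refine ⟨a₀, V, hV, fun q => ?_⟩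
  have hVV (i j : Fin d × Fin d) : ∑ a, V i a * starRingEnd ℂ (V j a) = if i = j then 1 else 0 := by
    simpa [mul_apply, one_apply] using congrFun (congrFun (mem_unitaryGroup_iff.mp hV) i) j
  have hd1 : (d : ℂ) ^ 2 - 1 ≠ 0 := by
    rw [sub_ne_zero]
    exact_mod_cast (Nat.one_lt_pow two_ne_zero hd).ne'
  have hspec (a : Fin d × Fin d) : (depolSpectrum d a₀ ((1 - 1 / (d : ℝ) ^ 2) * q) a : ℂ)
      = q / (d : ℂ) ^ 2 + if a = a₀ then ((1 - q : ℝ) : ℂ) else 0 := by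
    unfold depolSpectrum
    split_ifs
    all_goals push_cast; field_simp; ring
  ext i j
  rw [mul_diagonal_mul_star_apply]
  simp only [hspec, add_mul, Finset.sum_add_distrib, ← Finset.mul_sum, hVV, ite_mul, zero_mul,
    Finset.sum_ite_eq', Finset.mem_univ, if_true, hVa₀, ← maxEnt_apply_eq]
  simp [depolChoi, one_apply, div_eq_mul_inv]

-- The probability of a support pattern of total weight `W` whose target block (`u` slots) has
-- weight `w`, the remaining `N` slots being background.
def cpfLikelihood (qB qT : ℝ) (u N W w : ℕ) : ℝ :=
  qT ^ w * (1 - qT) ^ (u - w) * (qB ^ (W - w) * (1 - qB) ^ (N - (W - w)))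

theorem cpfLikelihood_swap (qB qT : ℝ) {u N W w : ℕ} (hw : w ≤ W) :
    cpfLikelihood qB qT u N W w = cpfLikelihood qT qB N u W (W - w) := by
  rw [cpfLikelihood, cpfLikelihood, Nat.sub_sub_self hw]
  ring

theorem cpfLikelihood_mul_pow (qB qT : ℝ) {u N W w w' : ℕ} (hww' : w ≤ w') (hw'u : w' ≤ u)
    (hw'W : w' ≤ W) (hWwN : W - w ≤ N) :
    cpfLikelihood qB qT u N W w * (qT * (1 - qB)) ^ (w' - w)
      = cpfLikelihood qB qT u N W w' * (qB * (1 - qT)) ^ (w' - w) := by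
  obtain ⟨δ, rfl⟩ := Nat.exists_eq_add_of_le hww'
  obtain ⟨e, rfl⟩ := Nat.exists_eq_add_of_le hw'u
  obtain ⟨f, rfl⟩ := Nat.exists_eq_add_of_le hw'W
  obtain ⟨g, rfl⟩ := Nat.exists_eq_add_of_le hWwN
  simp only [cpfLikelihood, show w + δ + f - w = f + δ by omega,
    show w + δ + e - w = e + δ by omega, show w + δ + e - (w + δ) = e by omega,
    show w + δ + f - (w + δ) = f by omega,
    show f + δ + g - f = g + δ by omega, Nat.add_sub_cancel_left, pow_add, mul_pow]
  ring

theorem cpfLikelihood_nonneg {qB qT : ℝ} (hB : qB ∈ Set.Icc (0 : ℝ) 1) (hT : qT ∈ Set.Icc (0 : ℝ) 1)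
    (u N W w : ℕ) : 0 ≤ cpfLikelihood qB qT u N W w := by
  obtain ⟨hB0, hB1⟩ := hB
  obtain ⟨hT0, hT1⟩ := hT
  unfold cpfLikelihood
  have := sub_nonneg.2 hB1
  have := sub_nonneg.2 hT1
  positivity

theorem cpfLikelihood_le_of_le {qB qT : ℝ} (hB0 : 0 ≤ qB) (hBT : qB ≤ qT) (hT1 : qT < 1)
    {u N W w w' : ℕ} (hww' : w ≤ w') (hw'u : w' ≤ u) (hw'W : w' ≤ W) (hWwN : W - w ≤ N) :
    cpfLikelihood qB qT u N W w ≤ cpfLikelihood qB qT u N W w' := by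
  rcases (mul_nonneg (hB0.trans hBT) (by linarith : (0 : ℝ) ≤ 1 - qB)).eq_or_lt with h0 | hpos
  · have hT0 : qT = 0 := by nlinarith
    have hB0' : qB = 0 := by linarith
    subst hT0 hB0'
    simp only [cpfLikelihood, sub_zero, one_pow, mul_one, ← pow_add,
      Nat.add_sub_cancel' (hww'.trans hw'W), Nat.add_sub_cancel' hw'W, le_refl]
  · have hratio : (qB * (1 - qT)) ^ (w' - w) ≤ (qT * (1 - qB)) ^ (w' - w) :=
      pow_le_pow_left₀ (mul_nonneg hB0 (by linarith)) (by nlinarith) _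
    refine le_of_mul_le_mul_right ?_ (pow_pos hpos (w' - w))
    rw [cpfLikelihood_mul_pow qB qT hww' hw'u hw'W hWwN]
    exact mul_le_mul_of_nonneg_left hratio
      (cpfLikelihood_nonneg ⟨hB0, by linarith⟩ ⟨by linarith, hT1.le⟩ _ _ _ _)

theorem cpfLikelihood_le_of_ge {qB qT : ℝ} (hT0 : 0 ≤ qT) (hTB : qT ≤ qB) (hB1 : qB < 1)
    {u N W w w' : ℕ} (hww' : w ≤ w') (hw'u : w' ≤ u) (hw'W : w' ≤ W) (hWwN : W - w ≤ N) :
    cpfLikelihood qB qT u N W w' ≤ cpfLikelihood qB qT u N W w := by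
  rw [cpfLikelihood_swap qB qT hw'W, cpfLikelihood_swap qB qT (hww'.trans hw'W)]
  exact cpfLikelihood_le_of_le hT0 hTB hB1 (by omega) hWwN (by omega) (by omega)

section OptimalWeight

variable {m u : ℕ}

theorem hamming_le (x : Fin u → Bool) : hamming x ≤ u :=
  (Finset.card_filter_le _ _).trans_eq (Finset.card_fin u)

theorem hamming_le_sum (x : Fin m → Fin u → Bool) (n : Fin m) :
    hamming (x n) ≤ ∑ l, hamming (x l) :=
  Finset.single_le_sum (f := fun l => hamming (x l)) (fun _ _ => Nat.zero_le _) (Finset.mem_univ n)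

theorem sum_hamming_sub_le (x : Fin m → Fin u → Bool) (n : Fin m) :
    ∑ l, hamming (x l) - hamming (x n) ≤ (m - 1) * u := by
  rw [← Finset.add_sum_erase _ _ (Finset.mem_univ n), Nat.add_sub_cancel_left]
  calc ∑ l ∈ univ.erase n, hamming (x l) ≤ ∑ _l ∈ univ.erase n, u :=
        Finset.sum_le_sum fun l _ => hamming_le (x l)
    _ = (m - 1) * u := by simp [Finset.card_erase_of_mem]

open Classical in
def optimalWeight (qB qT : ℝ) (x : Fin m → Fin u → Bool) : ℕ :=
  if qB ≤ qT then univ.sup fun l => hamming (x l) else sInf (Set.range fun l => hamming (x l))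

theorem hErr_eq (qB qT : ℝ) : hErr m u qB qT = 1 - (1 / (m : ℝ)) * ∑ x : Fin m → Fin u → Bool,
    cpfLikelihood qB qT u ((m - 1) * u) (∑ l, hamming (x l)) (optimalWeight qB qT x) := rfl

theorem exists_hamming_eq_optimalWeight [NeZero m] (qB qT : ℝ) (x : Fin m → Fin u → Bool) :
    ∃ n, hamming (x n) = optimalWeight qB qT x := by
  unfold optimalWeight
  split_ifs
  · obtain ⟨n, -, hn⟩ := Finset.exists_mem_eq_sup univ univ_nonempty fun l => hamming (x l)
    exact ⟨n, hn.symm⟩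
  · exact Nat.sInf_mem (Set.range_nonempty _)

theorem cpfLikelihood_le_optimalWeight [NeZero m] {qB qT : ℝ} (hB : qB ∈ Set.Ico (0 : ℝ) 1)
    (hT : qT ∈ Set.Ico (0 : ℝ) 1) (x : Fin m → Fin u → Bool) (n : Fin m) :
    cpfLikelihood qB qT u ((m - 1) * u) (∑ l, hamming (x l)) (hamming (x n))
      ≤ cpfLikelihood qB qT u ((m - 1) * u) (∑ l, hamming (x l)) (optimalWeight qB qT x) := by
  obtain ⟨n₀, hn₀⟩ := exists_hamming_eq_optimalWeight qB qT x
  by_cases hBT : qB ≤ qT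
  · have hsup : optimalWeight qB qT x = univ.sup fun l => hamming (x l) := if_pos hBT
    refine cpfLikelihood_le_of_le hB.1 hBT hT.2 ?_ (hn₀ ▸ hamming_le _) (hn₀ ▸ hamming_le_sum x n₀)
      (sum_hamming_sub_le x n)
    exact hsup ▸ Finset.le_sup (f := fun l => hamming (x l)) (Finset.mem_univ n)
  · have hinf : optimalWeight qB qT x = sInf (Set.range fun l => hamming (x l)) := if_neg hBT
    refine cpfLikelihood_le_of_ge hT.1 (le_of_not_ge hBT) hB.2 ?_ (hamming_le _)
      (hamming_le_sum x n) (hn₀ ▸ sum_hamming_sub_le x n₀)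
    exact hinf ▸ Nat.sInf_le ⟨n, rfl⟩

end OptimalWeight

section Counting

variable {m u : ℕ} {α : Type*} [Fintype α] [DecidableEq α]

theorem card_filter_comp_eq {K β γ : Type*} [Fintype K] [DecidableEq K] [Fintype β] [DecidableEq γ]
    (f : β → γ) (x : K → γ) :
    #{j : K → β | (fun l => f (j l)) = x} = ∏ l, #{b | f b = x l} := by
  rw [← Fintype.card_piFinset]
  congr 1
  ext j
  simp [Fintype.mem_piFinset, funext_iff]

theorem card_filter_ne_pattern_eq (a₀ : α) (x : Fin u → Bool) :
    #{v : Fin u → α | (fun k => decide (v k ≠ a₀)) = x} = (Fintype.card α - 1) ^ hamming x := by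
  have hfiber (b : Bool) : #{a | decide (a ≠ a₀) = b} = if b then Fintype.card α - 1 else 1 := by
    cases b <;> simp [Finset.filter_ne', Finset.filter_eq', Finset.card_erase_of_mem]
  refine (card_filter_comp_eq (fun a => decide (a ≠ a₀)) x).trans ?_
  rw [Finset.prod_congr rfl fun k _ => hfiber (x k), Finset.prod_ite,
    Finset.prod_const, Finset.prod_const_one, mul_one]
  rfl

-- `i k l` is the label at position `l` of copy `k`; patterns are indexed position first, as in
-- `hErr`.
def supportPattern (a₀ : α) (i : Fin u → Fin m → α) : Fin m → Fin u → Bool :=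
  fun l k => decide (i k l ≠ a₀)

theorem sum_supportPattern {R : Type*} [CommSemiring R] (a₀ : α)
    (F : (Fin m → Fin u → Bool) → R) :
    ∑ i : Fin u → Fin m → α, F (supportPattern a₀ i)
      = ∑ x, ((Fintype.card α - 1 : ℕ) : R) ^ (∑ l, hamming (x l)) * F x := by
  rw [Fintype.sum_equiv (Equiv.piComm _) (fun i => F (supportPattern a₀ i))
      (fun j => F fun l k => decide (j l k ≠ a₀)) fun _ => rfl,
    ← Finset.sum_fiberwise univ fun j l k => decide (j l k ≠ a₀)]
  refine Finset.sum_congr rfl fun x _ => ?_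
  rw [Finset.sum_congr rfl fun j hj => congrArg F (Finset.mem_filter.mp hj).2, Finset.sum_const,
    card_filter_comp_eq (fun v : Fin u → α => fun k => decide (v k ≠ a₀)) x, nsmul_eq_mul]
  simp only [card_filter_ne_pattern_eq, Finset.prod_pow_eq_pow_sum, Nat.cast_pow]

end Counting

theorem prod_ite_eq_pow_mul_pow {u : ℕ} {α M : Type*} [DecidableEq α] [CommMonoid M] (a₀ : α)
    (v : Fin u → α) (s t : M) :
    ∏ k, (if v k = a₀ then s else t) =
      t ^ hamming (fun k => decide (v k ≠ a₀)) * s ^ (u - hamming fun k => decide (v k ≠ a₀)) := by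
  have hcard : hamming (fun k => decide (v k ≠ a₀)) = #{k | ¬v k = a₀} := by simp [hamming]
  have hsplit := Finset.card_filter_add_card_filter_not (s := univ) fun k : Fin u => v k = a₀
  rw [Finset.card_univ, Fintype.card_fin] at hsplit
  rw [Finset.prod_ite, Finset.prod_const, Finset.prod_const, hcard, mul_comm,
    show #{k | v k = a₀} = u - #{k | ¬v k = a₀} by omega]

theorem prod_pow_mul_pow_eq_cpfLikelihood {m u : ℕ} (h : Fin m → ℕ) (hh : ∀ l, h l ≤ u) (n : Fin m)
    (qB qT : ℝ) :
    ∏ l, ((if l = n then qT else qB) ^ h l * (1 - if l = n then qT else qB) ^ (u - h l))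
      = cpfLikelihood qB qT u ((m - 1) * u) (∑ l, h l) (h n) := by
  have hsum : ∑ l ∈ univ.erase n, h l = ∑ l, h l - h n := by
    rw [← Finset.add_sum_erase _ _ (Finset.mem_univ n), Nat.add_sub_cancel_left]
  have hsub : ∑ l ∈ univ.erase n, (u - h l) = (m - 1) * u - (∑ l, h l - h n) := by
    rw [Finset.sum_tsub_distrib _ fun l _ => hh l, hsum]
    simp [Finset.card_erase_of_mem]
  rw [← Finset.mul_prod_erase _ _ (Finset.mem_univ n), if_pos rfl,
    Finset.prod_congr rfl fun l hl => by rw [if_neg (Finset.ne_of_mem_erase hl)],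
    Finset.prod_mul_distrib, Finset.prod_pow_eq_pow_sum, Finset.prod_pow_eq_pow_sum, hsum, hsub,
    cpfLikelihood]

theorem prod_prod_depolSpectrum {d m u : ℕ} (a₀ : Fin d × Fin d) (qB qT : ℝ)
    (i : Fin u → Fin m → Fin d × Fin d) (n : Fin m) :
    ∏ k, ∏ l, depolSpectrum d a₀ (if l = n then qT else qB) (i k l)
      = (1 / ((d : ℝ) ^ 2 - 1)) ^ (∑ l, hamming (supportPattern a₀ i l))
        * cpfLikelihood qB qT u ((m - 1) * u) (∑ l, hamming (supportPattern a₀ i l))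
            (hamming (supportPattern a₀ i n)) := by
  rw [Finset.prod_comm, ← prod_pow_mul_pow_eq_cpfLikelihood _ (fun l => hamming_le _),
    ← Finset.prod_pow_eq_pow_sum, ← Finset.prod_mul_distrib]
  refine Finset.prod_congr rfl fun l _ => ?_
  have hpat : supportPattern a₀ i l = fun k => decide (i k l ≠ a₀) := rfl
  simp only [depolSpectrum]
  rw [prod_ite_eq_pow_mul_pow a₀ (fun k => i k l), hpat, div_pow]
  ring

theorem one_sub_inv_sq_mul_mem_Ico {d : ℕ} (hd : 1 < d) {q : ℝ} (hq : q ∈ Set.Icc (0 : ℝ) 1) :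
    (1 - 1 / (d : ℝ) ^ 2) * q ∈ Set.Ico (0 : ℝ) 1 := by
  have hd2 : (1 : ℝ) < (d : ℝ) ^ 2 := by exact_mod_cast Nat.one_lt_pow two_ne_zero hd
  have hc0 : 0 ≤ 1 - 1 / (d : ℝ) ^ 2 := by
    rw [sub_nonneg, div_le_one (by positivity)]
    exact hd2.le
  have hc1 : 1 - 1 / (d : ℝ) ^ 2 < 1 := by
    rw [sub_lt_self_iff]
    positivity
  exact ⟨mul_nonneg hc0 hq.1, (mul_le_of_le_one_right hc0 hq.2).trans_lt hc1⟩

theorem exists_cpfStates_eq_unitary_diagonal {d : ℕ} (hd : 1 < d) (m u : ℕ) (qB qT : ℝ) :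
    ∃ a₀, ∃ U ∈ unitaryGroup (Fin u → Fin m → Fin d × Fin d) ℂ,
      (fun n : Fin m => tensorPow (tensorFam fun k =>
        if k = n then depolChoi d qT else depolChoi d qB) u)
      = fun n => U * diagonal (fun i => ((∏ k, ∏ l, depolSpectrum d a₀
          (if l = n then (1 - 1 / (d : ℝ) ^ 2) * qT else (1 - 1 / (d : ℝ) ^ 2) * qB) (i k l) : ℝ)
            : ℂ)) * star U := by
  obtain ⟨a₀, V, hV, hdepol⟩ := exists_depolChoi_eq_unitary_diagonal hd
  refine ⟨a₀, tensorPow (tensorFam fun _ => V) u,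
    tensorFam_mem_unitaryGroup fun _ => tensorFam_mem_unitaryGroup fun _ => hV, funext fun n => ?_⟩
  have hblock : (fun k => if k = n then depolChoi d qT else depolChoi d qB) = fun k =>
      V * diagonal (fun a => (depolSpectrum d a₀ (if k = n then (1 - 1 / (d : ℝ) ^ 2) * qT
        else (1 - 1 / (d : ℝ) ^ 2) * qB) a : ℂ)) * star V := by
    funext k
    split_ifs <;> exact hdepol _
  rw [hblock, tensorFam_unitary_diagonal, tensorPow_eq_tensorFam, tensorFam_unitary_diagonal]
  simp only [Complex.ofReal_prod, tensorPow_eq_tensorFam]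

theorem sum_inv_pow_mul_supportPattern {d m u : ℕ} (hd : 1 < d) (a₀ : Fin d × Fin d)
    (F : (Fin m → Fin u → Bool) → ℝ) :
    ∑ i : Fin u → Fin m → Fin d × Fin d,
      (1 / ((d : ℝ) ^ 2 - 1)) ^ (∑ l, hamming (supportPattern a₀ i l)) * F (supportPattern a₀ i)
      = ∑ x, F x := by
  have hN : ((Fintype.card (Fin d × Fin d) - 1 : ℕ) : ℝ) = (d : ℝ) ^ 2 - 1 := by
    rw [Fintype.card_prod, Fintype.card_fin,
      Nat.cast_sub (Nat.one_le_iff_ne_zero.mpr (by positivity)), Nat.cast_mul]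
    ring
  have hN0 : (d : ℝ) ^ 2 - 1 ≠ 0 := by
    rw [sub_ne_zero]
    exact_mod_cast (Nat.one_lt_pow two_ne_zero hd).ne'
  rw [sum_supportPattern a₀ fun x => (1 / ((d : ℝ) ^ 2 - 1)) ^ (∑ l, hamming (x l)) * F x, hN]
  refine Finset.sum_congr rfl fun x _ => ?_
  rw [← mul_assoc, ← mul_pow, mul_one_div_cancel hN0, one_pow, one_mul]

theorem helstrom_CPF_depolarizing_entangled_general (d : ℕ) (hd : 2 ≤ d)
    (m : ℕ) (hm : 2 ≤ m) (qB qT : ℝ)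
    (hB : qB ∈ Set.Icc (0:ℝ) 1) (hT : qT ∈ Set.Icc (0:ℝ) 1)
    (u : ℕ) :
    helstrom (fun n : Fin m => tensorPow (tensorFam (fun k =>
        if k = n then depolChoi d qT else depolChoi d qB)) u)
      (fun _ => 1/(m:ℝ))
      = hErr m u ((1 - 1/(d:ℝ)^2) * qB) ((1 - 1/(d:ℝ)^2) * qT) := by
  have : NeZero m := ⟨by omega⟩
  obtain ⟨a₀, U, hU, hstates⟩ := exists_cpfStates_eq_unitary_diagonal (by omega : 1 < d) m u qB qT
  have hB' := one_sub_inv_sq_mul_mem_Ico (by omega : 1 < d) hB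
  have hT' := one_sub_inv_sq_mul_mem_Ico (by omega : 1 < d) hT
  set rB := (1 - 1 / (d : ℝ) ^ 2) * qB
  set rT := (1 - 1 / (d : ℝ) ^ 2) * qT
  let L : (Fin m → Fin u → Bool) → ℝ := fun x => 1 / (m : ℝ) *
    cpfLikelihood rB rT u ((m - 1) * u) (∑ l, hamming (x l)) (optimalWeight rB rT x)
  rw [hstates, helstrom_unitary_conj hU, helstrom_diagonal _ _ fun i =>
      (1 / ((d : ℝ) ^ 2 - 1)) ^ (∑ l, hamming (supportPattern a₀ i l)) * L (supportPattern a₀ i),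
    sum_inv_pow_mul_supportPattern (by omega) a₀ L, hErr_eq, Finset.mul_sum]
  · intro n i
    have hN : (0 : ℝ) ≤ 1 / ((d : ℝ) ^ 2 - 1) :=
      one_div_nonneg.mpr (sub_nonneg.mpr (one_le_pow₀ (Nat.one_le_cast.mpr (by omega))))
    rw [prod_prod_depolSpectrum, mul_left_comm]
    exact mul_le_mul_of_nonneg_left (mul_le_mul_of_nonneg_left
      (cpfLikelihood_le_optimalWeight hB' hT' _ n) (by positivity)) (pow_nonneg hN _)
  · intro i
    obtain ⟨n, hn⟩ := exists_hamming_eq_optimalWeight rB rT (supportPattern a₀ i)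
    exact ⟨n, by rw [prod_prod_depolSpectrum, hn, mul_left_comm]⟩

/-- Helstrom limit for channel position finding with depolarizing channels and
maximally entangled inputs. -/
theorem helstrom_CPF_depolarizing_entangled (d : ℕ) (hd : 2 ≤ d)
    (m : ℕ) (hm : 2 ≤ m) (qB qT : ℝ)
    (hB : qB ∈ Set.Icc (0:ℝ) 1) (hT : qT ∈ Set.Icc (0:ℝ) 1)
    (u : ℕ) (hu : 1 ≤ u) :
    helstrom (fun n : Fin m => tensorPow (tensorFam (fun k =>
        if k = n then depolChoi d qT else depolChoi d qB)) u)
      (fun _ => 1/(m:ℝ))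
      = hErr m u ((1 - 1/(d:ℝ)^2) * qB) ((1 - 1/(d:ℝ)^2) * qT) :=
  helstrom_CPF_depolarizing_entangled_general d hd m hm qB qT hB hT u
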